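/- arXiv:2010.01018 — 5 statements merged into one kernel-verified Lean document; each statement's English description precedes it below -/
import Mathlib

section
/- If ι⁰ and ι¹ are nonnegative reals in [0,1] satisfying ι⁰ = λk·ϑ⁰/(1+λk·ϑ⁰) and ι¹ = λk·ϑ¹/(1+λk·ϑ¹), where ϑ⁰ = β·ι⁰+(1−β)·ι¹ and ϑ¹ = β·ι¹+(1−β)·ι⁰, with λk > 0 and β ∈ [0,1), then ι⁰ = ι¹. -/
lemma stmt_0_aux (ι0 ι1 lk β : ℝ)
    (h00 : 0 ≤ ι0) (h11 : ι1 ≤ 1)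
    (hlk : 0 < lk) (hb0 : 0 ≤ β) (hb1 : β < 1)
    (e0 : lk * (β * ι0 + (1 - β) * ι1) * (1 - ι0) = ι0)
    (e1 : lk * (β * ι1 + (1 - β) * ι0) * (1 - ι1) = ι1)
    (hlt : ι0 < ι1) : False := by
  have hι1lt : ι1 < 1 := by
    rcases lt_or_eq_of_le h11 with h | h
    · exact h
    · exfalso; rw [← h] at e1; nlinarith
  have hι0lt : ι0 < 1 := lt_trans hlt hι1lt
  have hι0pos : 0 < ι0 := by
    rcases lt_or_eq_of_le h00 with h | h
    · exact h
    · exfalso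
      rw [← h] at e0
      have hp : 0 < ι1 := by linarith
      nlinarith [mul_pos (mul_pos hlk (by linarith : (0:ℝ) < 1 - β)) hp]
  have key : lk * (2 * β - 1) * (ι0 - ι1) * ((1 - ι0) * (1 - ι1)) = ι0 - ι1 := by
    linear_combination (1 - ι1) * e0 - (1 - ι0) * e1
  have hne : ι0 - ι1 ≠ 0 := by linarith
  have k3 : lk * (2 * β - 1) * ((1 - ι0) * (1 - ι1)) = 1 := by
    have h := key
    field_simp at h ⊢
    apply mul_left_cancel₀ hne
    ring_nf
    ring_nf at h
    linarith
  have hbound : lk * β * (1 - ι0) ≤ 1 := by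
    have h1 : lk * β * ι0 * (1 - ι0) ≤ ι0 := by
      nlinarith [mul_nonneg (mul_nonneg (mul_nonneg hlk.le (by linarith : (0:ℝ) ≤ 1 - β)) (by linarith : (0:ℝ) ≤ ι1)) (by linarith : (0:ℝ) ≤ 1 - ι0)]
    have := (div_le_one hι0pos).mpr h1
    nlinarith
  nlinarith [mul_pos (mul_pos hlk (sub_pos.mpr hι0lt)) (sub_pos.mpr hι1lt)]

theorem stmt_0 (ι0 ι1 lk β : ℝ)
    (hι0 : ι0 ∈ Set.Icc (0:ℝ) 1) (hι1 : ι1 ∈ Set.Icc (0:ℝ) 1)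
    (hlk : 0 < lk) (hβ : β ∈ Set.Ico (0:ℝ) 1)
    (h0 : ι0 = lk * (β * ι0 + (1 - β) * ι1) / (1 + lk * (β * ι0 + (1 - β) * ι1)))
    (h1 : ι1 = lk * (β * ι1 + (1 - β) * ι0) / (1 + lk * (β * ι1 + (1 - β) * ι0))) :
    ι0 = ι1 := by
  obtain ⟨h00, h01⟩ := hι0
  obtain ⟨h10, h11⟩ := hι1
  obtain ⟨hb0, hb1⟩ := hβ
  have hb1' : 0 < 1 - β := by linarith
  have hd0 : (0:ℝ) < 1 + lk * (β * ι0 + (1 - β) * ι1) := by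
    have : 0 ≤ lk * (β * ι0 + (1 - β) * ι1) := by positivity
    linarith
  have hd1 : (0:ℝ) < 1 + lk * (β * ι1 + (1 - β) * ι0) := by
    have : 0 ≤ lk * (β * ι1 + (1 - β) * ι0) := by positivity
    linarith
  have e0 : lk * (β * ι0 + (1 - β) * ι1) * (1 - ι0) = ι0 := by
    have := h0
    field_simp at this
    nlinarith [this]
  have e1 : lk * (β * ι1 + (1 - β) * ι0) * (1 - ι1) = ι1 := by
    have := h1
    field_simp at this
    nlinarith [this]
  rcases lt_trichotomy ι0 ι1 with h | h | h
  · exact absurd (stmt_0_aux ι0 ι1 lk β h00 h11 hlk hb0 hb1 e0 e1 h) id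
  · exact h
  · exact absurd (stmt_0_aux ι1 ι0 lk β h10 h01 hlk hb0 hb1 e1 e0 h) id
end

section
/- Let y ∈ (1/2,1), β ∈ (0,1), ℓ, h ∈ [0,1) with ℓ ≤ h. Define P_b = y(β + (1−β)h − β(h−ℓ)) / (y(β + (1−β)h − β(h−ℓ)) + (1−y)β(1−h)) and P_{−b} = y(1−β)(1−h) / (y(1−β)(1−h) + (1−y)(1−β+βℓ)). Then P_b ≥ P_{−b}. -/
theorem stmt_7 (y β ℓ h : ℝ)
    (hy : y ∈ Set.Ioo (1/2 : ℝ) 1) (hβ : β ∈ Set.Ioo (0:ℝ) 1)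
    (hℓ : ℓ ∈ Set.Ico (0:ℝ) 1) (hh : h ∈ Set.Ico (0:ℝ) 1) (hℓh : ℓ ≤ h) :
    y*(1-β)*(1-h) / (y*(1-β)*(1-h) + (1-y)*(1-β+β*ℓ))
      ≤ y*(β + (1-β)*h - β*(h-ℓ)) /
        (y*(β + (1-β)*h - β*(h-ℓ)) + (1-y)*β*(1-h)) := by
  obtain ⟨hy1, hy2⟩ := hy
  obtain ⟨hb1, hb2⟩ := hβ
  obtain ⟨hl1, hl2⟩ := hℓ
  obtain ⟨hh1, hh2⟩ := hh
  have hy0 : 0 < y := by linarith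
  have hd1 : 0 < y*(1-β)*(1-h) + (1-y)*(1-β+β*ℓ) := by
    have h3 : 0 < 1-β+β*ℓ := by nlinarith
    have h4 : 0 < y*(1-β)*(1-h) := mul_pos (mul_pos hy0 (by linarith)) (by linarith)
    nlinarith [mul_pos (by linarith : (0:ℝ) < 1-y) h3]
  have hd2 : 0 < y*(β + (1-β)*h - β*(h-ℓ)) + (1-y)*β*(1-h) := by
    have h1 : 0 < β + (1-β)*h - β*(h-ℓ) := by nlinarith
    have h2 : 0 < y*(β + (1-β)*h - β*(h-ℓ)) := mul_pos hy0 h1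
    nlinarith [mul_nonneg (mul_nonneg (by linarith : (0:ℝ) ≤ 1-y) hb1.le) (by linarith : (0:ℝ) ≤ 1-h)]
  rw [div_le_div_iff₀ hd1 hd2]
  have key : (1-β)*(1-h)*(β*(1-h)) ≤ (β + (1-β)*h - β*(h-ℓ))*(1-β+β*ℓ) := by
    have s1 : (1-β)*(1-h)*(β*(1-h)) ≤ β*(1-h)*(1-β) := by
      nlinarith [mul_nonneg (mul_nonneg hb1.le (by linarith : (0:ℝ) ≤ 1-β)) (mul_nonneg (by linarith : (0:ℝ) ≤ 1-h) hh1)]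
    have s2 : β*(1-h)*(1-β) ≤ (β + (1-β)*h - β*(h-ℓ))*(1-β+β*ℓ) := by
      have e1 : β*(1-h) ≤ β + (1-β)*h - β*(h-ℓ) := by nlinarith [mul_nonneg (by linarith : (0:ℝ) ≤ 1-β) hh1, mul_nonneg hb1.le hl1]
      have e2 : (1-β) ≤ 1-β+β*ℓ := by nlinarith [mul_nonneg hb1.le hl1]
      have := mul_le_mul e1 e2 (by linarith) (by nlinarith [mul_nonneg (by linarith : (0:ℝ) ≤ 1-β) hh1, mul_nonneg hb1.le hl1, mul_nonneg hb1.le (by linarith : (0:ℝ) ≤ 1-h)])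
      linarith
    linarith
  nlinarith [mul_le_mul_of_nonneg_left key (mul_nonneg hy0.le (by linarith : (0:ℝ) ≤ 1-y))]
end

section
/- Let x : ℝ≥0 → [0,1) be strictly increasing, strictly concave, continuous with x(0)=0, and differentiable, and suppose verification efforts α_b, α_{−b} maximize, respectively, x(α) + (1−x(α))P_b − cα and x(α) + (1−x(α))P_{−b} − cα, with c > 0. If P_b ≥ P_{−b}, then x(α_b) ≤ x(α_{−b}); i.e., messages against one's bias are verified at a weakly higher rate. -/
theorem stmt_8 (x : ℝ → ℝ) (c Pb Pmb αb αmb : ℝ)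
    (hmono : StrictMonoOn x (Set.Ici 0))
    (hconc : StrictConcaveOn ℝ (Set.Ici 0) x)
    (hcont : Continuous x) (hx0 : x 0 = 0)
    (hrange : ∀ α ≥ (0:ℝ), 0 ≤ x α ∧ x α < 1)
    (hdiff : Differentiable ℝ x)
    (hc : 0 < c)
    (hαb : 0 ≤ αb) (hαmb : 0 ≤ αmb)
    (hmaxb : ∀ α ≥ (0:ℝ), x α + (1 - x α)*Pb - c*α ≤ x αb + (1 - x αb)*Pb - c*αb)
    (hmaxmb : ∀ α ≥ (0:ℝ), x α + (1 - x α)*Pmb - c*α ≤ x αmb + (1 - x αmb)*Pmb - c*αmb)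
    (hP : Pmb ≤ Pb) :
    x αb ≤ x αmb := by
  by_contra h
  push_neg at h
  have A := hmaxb αmb hαmb
  have B := hmaxmb αb hαb
  -- adding gives (x αb - x αmb) * (Pb - Pmb) ≤ 0
  have hsum : (x αb - x αmb) * (Pb - Pmb) ≤ 0 := by nlinarith
  have hPeq : Pb = Pmb := by
    rcases eq_or_lt_of_le hP with he | hlt
    · exact he.symm
    · nlinarith [mul_pos (sub_pos.mpr h) (sub_pos.mpr hlt)]
  subst hPeq
  -- values are equal
  have hval : x αmb + (1 - x αmb)*Pb - c*αmb = x αb + (1 - x αb)*Pb - c*αb := le_antisymm A B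
  -- αmb < αb
  have hlt : αmb < αb := by
    by_contra hle
    push_neg at hle
    exact absurd (hmono.monotoneOn hαb hαmb hle) (not_le.mpr h)
  -- 1 - Pb > 0
  have h1P : 0 < 1 - Pb := by nlinarith
  set m := (αmb + αb) / 2 with hm
  have hmpos : (0:ℝ) ≤ m := by positivity
  have hconcm : (1/2 : ℝ) • x αmb + (1/2 : ℝ) • x αb < x ((1/2 : ℝ) • αmb + (1/2 : ℝ) • αb) :=
    hconc.2 hαmb hαb (ne_of_lt hlt) (by norm_num) (by norm_num) (by norm_num)
  have hmid : (1/2 : ℝ) • αmb + (1/2 : ℝ) • αb = m := by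
    simp [hm]; ring
  rw [hmid] at hconcm
  simp only [smul_eq_mul] at hconcm
  have hmax := hmaxb m hmpos
  nlinarith [mul_lt_mul_of_pos_left hconcm h1P]
end

section
/- Let x(α) = 1 − e^{−α} for α ≥ 0, c ∈ (0,1), y ∈ (1/2,1), β ∈ (1/2,1) with y < β, c < 1 − y and 1−y−cβ > 0. Then ℓ = ((1−c−y)/(1−y))·((β−y)/β) and h = ((1−c−y)/(1−y))·((1−(1−c)y−cβ)/(1−y−cβ)) satisfy 0 < ℓ < h < 1 and solve the system 1−ℓ = c(y(β+(1−β)h−β(h−ℓ))/(β(1−y)(1−h)) + 1), 1−h = c(y(1−β)(1−h)/((1−y)(1−β+βℓ)) + 1). -/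
set_option maxHeartbeats 1600000 in
theorem stmt_13 (y β c : ℝ)
    (hy : y ∈ Set.Ioo (1/2 : ℝ) 1) (hβ : β ∈ Set.Ioo (1/2 : ℝ) 1)
    (hyβ : y < β) (hc : c ∈ Set.Ioo (0:ℝ) 1) (hcy : c < 1 - y)
    (hpos : 0 < 1 - y - c*β) :
    let ℓ := ((1 - c - y)/(1 - y)) * ((β - y)/β)
    let h := ((1 - c - y)/(1 - y)) * ((1 - (1 - c)*y - c*β)/(1 - y - c*β))
    0 < ℓ ∧ ℓ < h ∧ h < 1 ∧
    1 - ℓ = c * (y*(β + (1-β)*h - β*(h-ℓ)) / (β*(1-y)*(1-h)) + 1) ∧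
    1 - h = c * (y*(1-β)*(1-h) / ((1-y)*(1-β+β*ℓ)) + 1) := by
  obtain ⟨hy1, hy2⟩ := hy
  obtain ⟨hβ1, hβ2⟩ := hβ
  obtain ⟨hc1, hc2⟩ := hc
  intro ℓ h
  have hβ0 : 0 < β := by linarith
  have h1y : 0 < 1 - y := by linarith
  have hcy' : 0 < 1 - c - y := by linarith
  have hβy : 0 < β - y := by linarith
  have hA : 0 < (1 - c - y)/(1 - y) := by positivity
  have hℓ : 0 < ℓ := by
    show 0 < _ * _; positivity
  have hB1 : (β - y)/β < 1 := by rw [div_lt_one hβ0]; linarith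
  have hnum : 0 < 1 - (1 - c)*y - c*β := by nlinarith
  have hB2 : (1:ℝ) < (1 - (1 - c)*y - c*β)/(1 - y - c*β) := by
    rw [lt_div_iff₀ hpos]; nlinarith
  have hℓh : ℓ < h := mul_lt_mul_of_pos_left (lt_trans hB1 hB2) hA
  have hkey : c*(β - y) < (1-y)*(1-y) := by nlinarith
  have hh1 : h < 1 := by
    show _ * _ < 1
    rw [div_mul_div_comm, div_lt_one (by positivity)]
    nlinarith [mul_pos hc1 (sub_pos.mpr hkey)]
  have hℓval : ℓ = ((1 - c - y)/(1 - y)) * ((β - y)/β) := rfl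
  have hhval : h = ((1 - c - y)/(1 - y)) * ((1 - (1 - c)*y - c*β)/(1 - y - c*β)) := rfl
  have h1h : 0 < 1 - h := by linarith
  have hden2 : 0 < 1 - β + β*ℓ := by nlinarith
  -- clean product forms
  have hE1 : ℓ * ((1-y)*β) = (1-c-y)*(β-y) := by
    rw [hℓval]; field_simp
  have hE2 : h * ((1-y)*(1-y-c*β)) = (1-c-y)*(1-(1-c)*y-c*β) := by
    rw [hhval]; field_simp
  refine ⟨hℓ, hℓh, hh1, ?_, ?_⟩
  · have hD : (β*(1-y)*(1-h)) ≠ 0 := by positivity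
    have key1 : (1-ℓ)*(β*(1-y)*(1-h))
        = c*(y*(β + (1-β)*h - β*(h-ℓ)) + β*(1-y)*(1-h)) := by
      rw [hℓval, hhval]; field_simp; ring
    rw [show c * (y*(β + (1-β)*h - β*(h-ℓ)) / (β*(1-y)*(1-h)) + 1)
        = c*(y*(β + (1-β)*h - β*(h-ℓ)) + β*(1-y)*(1-h)) / (β*(1-y)*(1-h)) by
      field_simp]
    rw [eq_div_iff hD]
    linear_combination key1
  · have hD : ((1-y)*(1-β+β*ℓ)) ≠ 0 := by positivity
    have key2 : (1-h)*((1-y)*(1-β+β*ℓ))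
        = c*(y*(1-β)*(1-h) + (1-y)*(1-β+β*ℓ)) := by
      rw [hℓval, hhval]; field_simp; ring
    rw [show c * (y*(1-β)*(1-h) / ((1-y)*(1-β+β*ℓ)) + 1)
        = c*(y*(1-β)*(1-h) + (1-y)*(1-β+β*ℓ)) / ((1-y)*(1-β+β*ℓ)) by
      field_simp]
    rw [eq_div_iff hD]
    linear_combination key2
end

section
/- With the exponential verification function, in the interior equilibrium ℓ = ((1−c−y)/(1−y))·((β−y)/β), h = ((1−c−y)/(1−y))·((1−(1−c)y−cβ)/(1−y−cβ)) (with 1/2 < y < β < 1, 0 < c < 1−y, 1−y−cβ > 0), the truth to rumor ratio (1+h)/(1−h) − 2β(h−ℓ)/(1−h) equals (2(1−y)−c)/c, and in particular is independent of β. -/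
theorem stmt_14 (y β c : ℝ)
    (hy : y ∈ Set.Ioo (1/2 : ℝ) 1) (hβ : β < 1) (hyβ : y < β)
    (hc : 0 < c) (hcy : c < 1 - y) (hpos : 0 < 1 - y - c*β) :
    let ℓ := ((1 - c - y)/(1 - y)) * ((β - y)/β)
    let h := ((1 - c - y)/(1 - y)) * ((1 - (1 - c)*y - c*β)/(1 - y - c*β))
    (1 + h)/(1 - h) - 2*β*(h - ℓ)/(1 - h) = (2*(1 - y) - c)/c := by
  obtain ⟨hy1, hy2⟩ := hy
  have hβ0 : (0:ℝ) < β := lt_trans (by linarith) hyβ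
  have h1y : (0:ℝ) < 1 - y := by linarith
  intro ℓ h
  have hnum : 1 - h = c * ((1-y)^2 - c*(β-y)) / ((1-y)*(1-y-c*β)) := by
    show 1 - ((1 - c - y)/(1 - y)) * ((1 - (1 - c)*y - c*β)/(1 - y - c*β)) = _
    field_simp
    ring
  have hden : (0:ℝ) < (1-y)^2 - c*(β-y) := by nlinarith
  have h1h : (0:ℝ) < 1 - h := by
    rw [hnum]
    positivity
  show (1 + h)/(1 - h) - 2*β*(h - ℓ)/(1 - h) = (2*(1 - y) - c)/c
  rw [div_sub_div_same, div_eq_div_iff (by linarith) (ne_of_gt hc)]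
  show (1 + ((1 - c - y)/(1 - y)) * ((1 - (1 - c)*y - c*β)/(1 - y - c*β)) -
      2*β*(((1 - c - y)/(1 - y)) * ((1 - (1 - c)*y - c*β)/(1 - y - c*β)) -
      ((1 - c - y)/(1 - y)) * ((β - y)/β))) * c = (2*(1 - y) - c) *
      (1 - ((1 - c - y)/(1 - y)) * ((1 - (1 - c)*y - c*β)/(1 - y - c*β)))
  field_simp
  ring
end
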